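/- Let K be a category, κ a regular cardinal, and u a semicontinuous Fraïssé sequence of length κ in ↻K. If ↻K has proper amalgamations, then for every semicontinuous sequence x of length ≤ κ in ↻K there exist a strictly increasing map φ from the length of x into κ and ↻K-arrows f_α : x_α → u_{φ(α)} such that for all ξ < η below the length of x: (i) u_{φ(ξ)}^{φ(η)}∘f_ξ = f_η∘x_ξ^η in ↻K, and (ii) r(u_{φ(ξ)}^{φ(η)})∘e(f_η) = e(f_ξ)∘r(x_ξ^η) in K. -/

import Mathlib

/-!
The maps are built by transfinite recursion on `α`, keeping the invariant that for `β ≤ α` the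
square formed by `x_β^α`, `f_β`, `f_α` and `u_{φβ}^{φα}` is a proper amalgamation; (ii) is one of
its two properness identities.

At a successor, properly amalgamate `x_β^α` with `f_β` and map the amalgam into `u` by (A);
postcomposing with any `↻K`-arrow `n` keeps a square proper because `r(n) ∘ e(n) = id`.

At a limit `δ`, regularity of `κ` puts `θ = sup φ(β)` below `κ`, and `θ` is a limit ordinal.
The `e`-part of `f_δ` is induced through the colimit `x_δ` of the `e(f_β)`; the `r`-part through
the colimit `u_θ`, the second properness identity being what makes the maps
`e(x_β^δ) ∘ r(f_β)` compatible. Both `r ∘ e = id` and the properness of the new squares are then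
checked against the colimit cocones.
-/

open CategoryTheory

universe w v u

variable {C : Type u} [Category.{v} C]

/-- An arrow of the category `↻K`: a pair `(e, r)` of arrows of `K` with `r ∘ e = id`. -/
@[ext]
structure RPHom (X Y : C) : Type v where
  e : X ⟶ Y
  r : Y ⟶ X
  retract : e ≫ r = 𝟙 X

/-- The category `↻K`: same objects as `K`, arrows are retractive pairs, composed by
`(e g ∘ e f, r f ∘ r g)`. -/
def RP (C : Type u) [Category.{v} C] : Type u := C

instance : Category.{v} (RP C) where
  Hom X Y := RPHom (C := C) X Y
  id X := ⟨𝟙 (show C from X), 𝟙 (show C from X), Category.comp_id (obj := C) _⟩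
  comp {X Y Z} f g := ⟨RPHom.e f ≫ RPHom.e g, RPHom.r g ≫ RPHom.r f, by
    exact (Category.assoc (obj := C) _ _ _).trans ((congrArg (fun t => RPHom.e f ≫ t)
      ((Category.assoc (obj := C) _ _ _).symm.trans ((congrArg (· ≫ RPHom.r f) (RPHom.retract g)).trans
        (Category.id_comp (obj := C) _)))).trans (RPHom.retract f))⟩
  id_comp f := by apply RPHom.ext <;> first | exact Category.id_comp (obj := C) _ | exact Category.comp_id (obj := C) _
  comp_id f := by apply RPHom.ext <;> first | exact Category.id_comp (obj := C) _ | exact Category.comp_id (obj := C) _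
  assoc f g h := by apply RPHom.ext <;> first | exact Category.assoc (obj := C) _ _ _ | exact (Category.assoc (obj := C) _ _ _).symm

/-- An object of `↻K`, viewed as an object of `K`. -/
abbrev RP.toObj (X : RP C) : C := X

/-- The index set of ordinals below `κ`, used to index inductive sequences of length `κ`. -/
abbrev Idx (κ : Ordinal.{w}) : Type (w + 1) := {ξ : Ordinal.{w} // ξ < κ}

/-- An inductive sequence indexed by a preorder `I` is a Fraïssé sequence if it is
cofinal (U) and has the amalgamation property (A). -/
def IsFraisseSeq {D : Type u} [Category.{v} D] {I : Type*} [Preorder I] (F : I ⥤ D) : Prop :=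
  (∀ x : D, ∃ ξ : I, Nonempty (x ⟶ F.obj ξ)) ∧
  (∀ (ξ : I) (y : D) (f : F.obj ξ ⟶ y),
    ∃ (η : I) (h : ξ ≤ η) (g : y ⟶ F.obj η), f ≫ g = F.map (homOfLE h))

/-- A sequence in `↻K` is semicontinuous if its image under the functor `e` is continuous
in `K`: at every limit ordinal `δ` below its length, `x_δ` together with the arrows
`e(x_ξ^δ)` is a colimit in `K`. -/
def IsSemicontinuousSeq {μ : Ordinal.{w}} (x : Idx μ ⥤ RP C) : Prop :=
  ∀ δ : Idx μ, Order.IsSuccLimit δ.1 →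
    ∀ (y : C) (g : ∀ ξ : Idx μ, ξ < δ → ((x.obj ξ).toObj ⟶ y)),
      (∀ (ξ η : Idx μ) (hξ : ξ < δ) (hη : η < δ) (h : ξ ≤ η),
        (x.map (homOfLE h)).e ≫ g η hη = g ξ hξ) →
      ∃! h : (x.obj δ).toObj ⟶ y, ∀ (ξ : Idx μ) (hξ : ξ < δ),
        (x.map (homOfLE hξ.le)).e ≫ h = g ξ hξ

/-- `↻K` has proper amalgamations: every pair of `↻K`-arrows with common domain admits a
proper amalgamation. -/
def HasProperAmalgamations (C : Type u) [Category.{v} C] : Prop :=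
  ∀ (Z X Y : C) (f : RPHom Z X) (g : RPHom Z Y),
    ∃ (W : C) (h : RPHom X W) (k : RPHom Y W),
      f.e ≫ h.e = g.e ≫ k.e ∧ h.r ≫ f.r = k.r ≫ g.r ∧
      f.r ≫ g.e = h.e ≫ k.r ∧ g.r ≫ f.e = k.e ≫ h.r

open Order

namespace CategoryTheory.Functor

variable {I D : Type*} [Preorder I] [Category D] (F : I ⥤ D) {a b c : I}

lemma map_homOfLE_trans (hab : a ≤ b) (hbc : b ≤ c) (hac : a ≤ c := hab.trans hbc) :
    F.map (homOfLE hac) = F.map (homOfLE hab) ≫ F.map (homOfLE hbc) := by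
  rw [← F.map_comp, homOfLE_comp]

@[simp] lemma map_homOfLE_refl (h : a ≤ a) : F.map (homOfLE h) = 𝟙 (F.obj a) :=
  F.map_id a

end CategoryTheory.Functor

namespace RP

-- `RPHom.e f` has its endpoints typed in `RP C`, which blocks rewriting with lemmas of `C`;
-- these restate the components with endpoints in `C`.
def e {X Y : RP C} (f : X ⟶ Y) : X.toObj ⟶ Y.toObj := RPHom.e f

def r {X Y : RP C} (f : X ⟶ Y) : Y.toObj ⟶ X.toObj := RPHom.r f

@[simp] lemma comp_e {X Y Z : RP C} (f : X ⟶ Y) (g : Y ⟶ Z) : e (f ≫ g) = e f ≫ e g := rfl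

@[simp] lemma comp_r {X Y Z : RP C} (f : X ⟶ Y) (g : Y ⟶ Z) : r (f ≫ g) = r g ≫ r f := rfl

@[simp] lemma id_e (X : RP C) : e (𝟙 X) = 𝟙 X.toObj := rfl

@[simp] lemma id_r (X : RP C) : r (𝟙 X) = 𝟙 X.toObj := rfl

@[simp] lemma e_comp_r {X Y : RP C} (f : X ⟶ Y) : e f ≫ r f = 𝟙 X.toObj := f.retract

@[simp] lemma e_comp_r_assoc {X Y : RP C} (f : X ⟶ Y) {W : C} (g : X.toObj ⟶ W) :
    e f ≫ r f ≫ g = g := by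
  rw [← Category.assoc, e_comp_r, Category.id_comp]

lemma hom_ext {X Y : RP C} {f g : X ⟶ Y} (he : e f = e g) (hr : r f = r g) : f = g :=
  RPHom.ext he hr

variable {I : Type*} [Preorder I] (F : I ⥤ RP C) {a b c : I}

lemma map_e_trans (hab : a ≤ b) (hbc : b ≤ c) (hac : a ≤ c := hab.trans hbc) :
    e (F.map (homOfLE hac)) = e (F.map (homOfLE hab)) ≫ e (F.map (homOfLE hbc)) := by
  rw [F.map_homOfLE_trans hab hbc hac, comp_e]

lemma map_r_trans (hab : a ≤ b) (hbc : b ≤ c) (hac : a ≤ c := hab.trans hbc) :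
    r (F.map (homOfLE hac)) = r (F.map (homOfLE hbc)) ≫ r (F.map (homOfLE hab)) := by
  rw [F.map_homOfLE_trans hab hbc hac, comp_r]

lemma map_e_comp_map_r (hab : a ≤ b) (hbc : b ≤ c) (hac : a ≤ c := hab.trans hbc) :
    e (F.map (homOfLE hbc)) ≫ r (F.map (homOfLE hac)) = r (F.map (homOfLE hab)) := by
  rw [map_r_trans F hab hbc hac, e_comp_r_assoc]

end RP

open RP

-- `h` and `k` properly amalgamate `f` and `g`.
structure IsProperSq {Z X Y W : RP C} (f : Z ⟶ X) (g : Z ⟶ Y) (h : X ⟶ W) (k : Y ⟶ W) : Prop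
    extends CommSq f g h k where
  r_e_top : r f ≫ e g = e h ≫ r k
  r_e_left : r g ≫ e f = e k ≫ r h

namespace IsProperSq

variable {Z X Y W : RP C} {f : Z ⟶ X} {g : Z ⟶ Y} {h : X ⟶ W} {k : Y ⟶ W}

lemma w_e (sq : IsProperSq f g h k) : e f ≫ e h = e g ≫ e k := by
  simpa only [comp_e] using congrArg e sq.w

lemma w_r (sq : IsProperSq f g h k) : r h ≫ r f = r k ≫ r g := by
  simpa only [comp_r] using congrArg r sq.w

lemma horiz_refl (g : Z ⟶ Y) : IsProperSq (𝟙 Z) g g (𝟙 Y) where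
  w := by rw [Category.id_comp, Category.comp_id]
  r_e_top := by rw [id_r, id_r, Category.id_comp, Category.comp_id]
  r_e_left := by rw [id_e, id_e, Category.id_comp, Category.comp_id]

lemma horiz_comp {X' W' : RP C} {f' : X ⟶ X'} {h' : X' ⟶ W'} {k' : W ⟶ W'}
    (sq : IsProperSq f g h k) (sq' : IsProperSq f' h h' k') :
    IsProperSq (f ≫ f') g h' (k ≫ k') where
  w := (sq.toCommSq.horiz_comp sq'.toCommSq).w
  r_e_top := by
    rw [comp_r, comp_r, Category.assoc, sq.r_e_top, ← Category.assoc, sq'.r_e_top,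
      Category.assoc]
  r_e_left := by
    rw [comp_e, comp_e, ← Category.assoc, sq.r_e_left, Category.assoc, sq'.r_e_left,
      Category.assoc]

lemma comp_right {W' : RP C} (sq : IsProperSq f g h k) (n : W ⟶ W') :
    IsProperSq f g (h ≫ n) (k ≫ n) where
  w := by rw [← Category.assoc, sq.w, Category.assoc]
  r_e_top := by rw [comp_e, comp_r, Category.assoc, e_comp_r_assoc, sq.r_e_top]
  r_e_left := by rw [comp_e, comp_r, Category.assoc, e_comp_r_assoc, sq.r_e_left]

end IsProperSq

lemma HasProperAmalgamations.exists_isProperSq (hpa : HasProperAmalgamations C) {Z X Y : RP C}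
    (f : Z ⟶ X) (g : Z ⟶ Y) : ∃ (W : RP C) (h : X ⟶ W) (k : Y ⟶ W), IsProperSq f g h k := by
  obtain ⟨W, h, k, he, hr, h₁, h₂⟩ := hpa Z X Y f g
  exact ⟨W, h, k, ⟨RP.hom_ext he hr⟩, h₁, h₂⟩

section Stage

variable {I J : Type*} [Preorder I] [Preorder J] {u : I ⥤ RP C} {x : J ⥤ RP C}

-- a candidate value `(φ α, f α)` of the construction
variable (u x) in
abbrev Stage (α : J) : Type _ := Σ ζ : I, x.obj α ⟶ u.obj ζ

structure Stage.Coherent {β γ : J} (hβγ : β ≤ γ) (p : Stage u x β) (q : Stage u x γ) : Prop where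
  le : p.1 ≤ q.1
  lt_of_lt : β < γ → p.1 < q.1
  isProperSq : IsProperSq (x.map (homOfLE hβγ)) p.2 q.2 (u.map (homOfLE le))

namespace Stage.Coherent

lemma refl {β : J} (p : Stage u x β) : Coherent le_rfl p p where
  le := le_rfl
  lt_of_lt h := absurd h (lt_irrefl β)
  isProperSq := by simpa only [Functor.map_homOfLE_refl] using IsProperSq.horiz_refl p.2

lemma trans {β γ δ : J} {hβγ : β ≤ γ} {hγδ : γ ≤ δ} {p : Stage u x β} {q : Stage u x γ}
    {s : Stage u x δ} (hpq : Coherent hβγ p q) (hqs : Coherent hγδ q s) :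
    Coherent (hβγ.trans hγδ) p s where
  le := hpq.le.trans hqs.le
  lt_of_lt h := by
    by_cases hβγ' : β < γ
    · exact (hpq.lt_of_lt hβγ').trans_le hqs.le
    · exact hpq.le.trans_lt (hqs.lt_of_lt ((not_lt_iff_le_imp_ge.mp hβγ' hβγ).trans_lt h))
  isProperSq := by
    simpa only [← Functor.map_comp, homOfLE_comp] using hpq.isProperSq.horiz_comp hqs.isProperSq

end Stage.Coherent

lemma Stage.exists_coherent_of_le [IsDirected I (· ≤ ·)] [NoMaxOrder I] (hu : IsFraisseSeq u)
    (hpa : HasProperAmalgamations C) {β α : J} (hβα : β ≤ α) (p : Stage u x β) :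
    ∃ s : Stage u x α, p.Coherent hβα s := by
  obtain ⟨W, h, k, sq⟩ := hpa.exists_isProperSq (x.map (homOfLE hβα)) p.2
  obtain ⟨η, hη, g, hg⟩ := hu.2 p.1 W k
  obtain ⟨ζ', hζ'⟩ := exists_gt p.1
  obtain ⟨ζ, hηζ, hζ'ζ⟩ := directed_of (· ≤ ·) η ζ'
  have hk : u.map (homOfLE (hη.trans hηζ)) = k ≫ g ≫ u.map (homOfLE hηζ) := by
    rw [← Category.assoc, hg, Functor.map_homOfLE_trans]
  refine ⟨⟨ζ, h ≫ g ≫ u.map (homOfLE hηζ)⟩, hη.trans hηζ, fun _ => hζ'.trans_le hζ'ζ, ?_⟩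
  rw [hk]
  exact sq.comp_right _

end Stage

section Semicontinuous

variable {μ : Ordinal.{w}} {x : Idx μ ⥤ RP C}

lemma IsSemicontinuousSeq.hom_ext (hx : IsSemicontinuousSeq x) {δ : Idx μ}
    (hδ : IsSuccLimit δ.1) {y : C} {h₁ h₂ : (x.obj δ).toObj ⟶ y}
    (H : ∀ ξ < δ, ∃ ξ', ∃ hξ' : ξ' < δ, ξ ≤ ξ' ∧
      e (x.map (homOfLE hξ'.le)) ≫ h₁ = e (x.map (homOfLE hξ'.le)) ≫ h₂) : h₁ = h₂ := by
  obtain ⟨t, -, ht⟩ := hx δ hδ y (fun ξ hξ => e (x.map (homOfLE hξ.le)) ≫ h₁)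
    fun ξ η hξ hη hξη => by
      change e _ ≫ e _ ≫ h₁ = _
      rw [← Category.assoc, ← map_e_trans]
  refine (ht h₁ fun _ _ => rfl).trans (ht h₂ fun ξ hξ => ?_).symm
  obtain ⟨ξ', hξ', hξξ', H'⟩ := H ξ hξ
  change e _ ≫ h₂ = e _ ≫ h₁
  rw [map_e_trans x hξξ' hξ'.le, Category.assoc, Category.assoc, H']

lemma IsSemicontinuousSeq.exists_desc_of_cofinal (hx : IsSemicontinuousSeq x) {δ : Idx μ}
    (hδ : IsSuccLimit δ.1) {ι : Type*} [Preorder ι] [IsDirected ι (· ≤ ·)] {ψ : ι → Idx μ}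
    (hψ : Monotone ψ) (hψδ : ∀ j, ψ j < δ) (hcof : ∀ ξ < δ, ∃ j, ξ ≤ ψ j) {y : C}
    (g : ∀ j, (x.obj (ψ j)).toObj ⟶ y)
    (hg : ∀ i j (hij : i ≤ j), e (x.map (homOfLE (hψ hij))) ≫ g j = g i) :
    ∃ t : (x.obj δ).toObj ⟶ y, ∀ j, e (x.map (homOfLE (hψδ j).le)) ≫ t = g j := by
  have indep : ∀ ξ i j (hi : ξ ≤ ψ i) (hj : ξ ≤ ψ j),
      e (x.map (homOfLE hi)) ≫ g i = e (x.map (homOfLE hj)) ≫ g j := by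
    intro ξ i j hi hj
    obtain ⟨k, hik, hjk⟩ := directed_of (· ≤ ·) i j
    rw [← hg i k hik, ← hg j k hjk, ← Category.assoc, ← Category.assoc, ← map_e_trans,
      ← map_e_trans]
  choose j hj using hcof
  obtain ⟨t, ht, -⟩ := hx δ hδ y (fun ξ hξ => e (x.map (homOfLE (hj ξ hξ))) ≫ g (j ξ hξ))
    fun ξ η hξ hη hξη => by
      change e _ ≫ e _ ≫ g _ = _
      rw [← Category.assoc, ← map_e_trans]
      exact indep _ _ _ _ _
  refine ⟨t, fun i => (ht _ (hψδ i)).trans ?_⟩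
  rw [indep _ _ i _ le_rfl, Functor.map_homOfLE_refl, id_e, Category.id_comp]

end Semicontinuous

lemma Idx.noMaxOrder {o : Ordinal.{w}} (ho : IsSuccLimit o) : NoMaxOrder (Idx o) :=
  ⟨fun a => ⟨⟨succ a.1, ho.succ_lt a.2⟩, lt_succ a.1⟩⟩

lemma Cardinal.IsRegular.exists_isSuccLimit_cofinal {κ : Cardinal.{w}} (hκ : κ.IsRegular)
    {δ : Ordinal.{w}} (hδ : IsSuccLimit δ) (hδκ : δ < κ.ord) {φ : Idx δ → Idx κ.ord}
    (hφ : StrictMono φ) :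
    ∃ θ : Idx κ.ord, IsSuccLimit θ.1 ∧ (∀ i, φ i < θ) ∧ ∀ ζ < θ, ∃ i, ζ ≤ φ i := by
  have := Idx.noMaxOrder hδ
  have : Nonempty (Idx δ) := ⟨⟨0, hδ.bot_lt⟩⟩
  have hbdd : BddAbove (Set.range fun i => (φ i).1) :=
    ⟨κ.ord, by rintro _ ⟨i, rfl⟩; exact (φ i).2.le⟩
  have hθκ : ⨆ i, (φ i).1 < κ.ord := by
    refine Ordinal.lift_iSup_lt_of_lt_cof ?_ fun i => (φ i).2
    change Cardinal.lift (Cardinal.mk (Set.Iio δ)) < _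
    rw [Cardinal.mk_Iio_ordinal, ← Ordinal.lift_cof, hκ.cof_ord, Cardinal.lift_lift,
      Cardinal.lift_lt]
    exact Cardinal.lt_ord.mp hδκ
  have hlt : ∀ i, (φ i).1 < ⨆ i, (φ i).1 := fun i =>
    let ⟨j, hij⟩ := exists_gt i
    (show (φ i).1 < (φ j).1 from hφ hij).trans_le (le_ciSup hbdd j)
  have hcof : ∀ a < ⨆ i, (φ i).1, ∃ i, a < (φ i).1 := fun a ha => (lt_ciSup_iff hbdd).mp ha
  refine ⟨⟨_, hθκ⟩, ?_, hlt, fun ζ hζ => (hcof ζ.1 hζ).imp fun _ h => h.le⟩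
  rw [Ordinal.isSuccLimit_iff, isSuccPrelimit_iff_succ_lt]
  exact ⟨(zero_le.trans_lt (hlt ⟨0, hδ.bot_lt⟩)).ne',
    fun a ha => let ⟨i, hi⟩ := hcof a ha; (succ_le_of_lt hi).trans_lt (hlt i)⟩

section Limit

variable {κo μ : Ordinal.{w}} {u : Idx κo ⥤ RP C} {x : Idx μ ⥤ RP C}

lemma Stage.exists_r_of_isSuccLimit (hu : IsSemicontinuousSeq u) {δ : Idx μ} {θ : Idx κo}
    (hθ : IsSuccLimit θ.1) (F : ∀ β < δ, Stage u x β)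
    (hF : ∀ β γ (hβ : β < δ) (hγ : γ < δ) (h : β ≤ γ), (F β hβ).Coherent h (F γ hγ))
    (hFθ : ∀ β hβ, (F β hβ).1 < θ) (hcof : ∀ ζ < θ, ∃ β hβ, ζ ≤ (F β hβ).1) :
    ∃ R : (u.obj θ).toObj ⟶ (x.obj δ).toObj, ∀ β hβ,
      e (u.map (homOfLE (hFθ β hβ).le)) ≫ R = r (F β hβ).2 ≫ e (x.map (homOfLE (le_of_lt hβ))) :=
  (hu.exists_desc_of_cofinal hθ (ι := {β // β < δ}) (ψ := fun β => (F β.1 β.2).1)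
    (fun β γ hβγ => (hF _ _ β.2 γ.2 hβγ).le) (fun β => hFθ _ β.2)
    (fun ζ hζ => let ⟨β, hβ, h⟩ := hcof ζ hζ; ⟨⟨β, hβ⟩, h⟩)
    (fun β => r (F β.1 β.2).2 ≫ e (x.map (homOfLE β.2.le))) fun β γ hβγ => by
      rw [← Category.assoc, ← (hF _ _ β.2 γ.2 hβγ).isProperSq.r_e_left, Category.assoc,
        ← map_e_trans]).imp fun _ hR β hβ => hR ⟨β, hβ⟩

lemma Stage.exists_coherent_of_isSuccLimit (hu : IsSemicontinuousSeq u)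
    (hx : IsSemicontinuousSeq x) {δ : Idx μ} (hδ : IsSuccLimit δ.1) {θ : Idx κo}
    (hθ : IsSuccLimit θ.1) (F : ∀ β < δ, Stage u x β)
    (hF : ∀ β γ (hβ : β < δ) (hγ : γ < δ) (h : β ≤ γ), (F β hβ).Coherent h (F γ hγ))
    (hFθ : ∀ β hβ, (F β hβ).1 < θ) (hcof : ∀ ζ < θ, ∃ β hβ, ζ ≤ (F β hβ).1) :
    ∃ f : x.obj δ ⟶ u.obj θ, ∀ β hβ, (F β hβ).Coherent hβ.le ⟨θ, f⟩ := by
  obtain ⟨E, hE, -⟩ := hx δ hδ (u.obj θ).toObj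
    (fun β hβ => e (F β hβ).2 ≫ e (u.map (homOfLE (hFθ β hβ).le))) fun β γ hβ hγ hβγ => by
      change e _ ≫ e _ ≫ e _ = _
      rw [← Category.assoc, (hF β γ hβ hγ hβγ).isProperSq.w_e, Category.assoc, ← map_e_trans]
  replace hE : ∀ β hβ, e (x.map (homOfLE (le_of_lt hβ))) ≫ E
      = e (F β hβ).2 ≫ e (u.map (homOfLE (hFθ β hβ).le)) := hE
  obtain ⟨R, hR⟩ := exists_r_of_isSuccLimit hu hθ F hF hFθ hcof
  have hER : E ≫ R = 𝟙 _ := hx.hom_ext hδ fun ξ hξ => ⟨ξ, hξ, le_rfl, by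
    rw [← Category.assoc, hE ξ hξ, Category.assoc, hR ξ hξ, e_comp_r_assoc,
      Category.comp_id]⟩
  have hRr : ∀ β hβ, R ≫ r (x.map (homOfLE (le_of_lt hβ)))
      = r (u.map (homOfLE (hFθ β hβ).le)) ≫ r (F β hβ).2 := fun β hβ =>
    hu.hom_ext hθ fun ζ hζ => by
      obtain ⟨γ, hγ, hζγ⟩ := hcof ζ hζ
      have hβξ := hF β (max β γ) hβ (max_lt hβ hγ) (le_max_left _ _)
      refine ⟨_, hFθ _ (max_lt hβ hγ),
        hζγ.trans (hF γ (max β γ) hγ (max_lt hβ hγ) (le_max_right _ _)).le, ?_⟩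
      rw [← Category.assoc, hR _ (max_lt hβ hγ), Category.assoc,
        map_e_comp_map_r x (le_max_left _ _), ← Category.assoc, map_e_comp_map_r u hβξ.le,
        hβξ.isProperSq.w_r]
  have hEr : ∀ β hβ, r (x.map (homOfLE (le_of_lt hβ))) ≫ e (F β hβ).2
      = E ≫ r (u.map (homOfLE (hFθ β hβ).le)) := fun β hβ =>
    hx.hom_ext hδ fun ξ hξ => by
      have hβξ := hF β (max ξ β) hβ (max_lt hξ hβ) (le_max_right _ _)
      refine ⟨max ξ β, max_lt hξ hβ, le_max_left _ _, ?_⟩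
      rw [← Category.assoc, map_e_comp_map_r x (le_max_right _ _), ← Category.assoc, hE,
        Category.assoc, map_e_comp_map_r u hβξ.le, hβξ.isProperSq.r_e_top]
  refine ⟨⟨E, R, hER⟩, fun β hβ => ⟨(hFθ β hβ).le, fun _ => hFθ β hβ, ⟨⟨?_⟩, hEr β hβ,
    (hR β hβ).symm⟩⟩⟩
  exact RP.hom_ext (hE β hβ) (hRr β hβ)

end Limit

lemma WellFoundedLT.exists_coherent_family {J : Type*} [PartialOrder J] [WellFoundedLT J]
    {S : J → Sort*} (R : ∀ {β γ : J}, β ≤ γ → S β → S γ → Prop)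
    (hrefl : ∀ α (s : S α), R le_rfl s s)
    (hstep : ∀ α (F : ∀ β < α, S β), ∃ s,
      (∀ β γ (hβ : β < α) (hγ : γ < α) (h : β ≤ γ), R h (F β hβ) (F γ hγ)) →
        ∀ β hβ, R (le_of_lt hβ) (F β hβ) s) :
    ∃ f : ∀ α, S α, ∀ β γ (h : β ≤ γ), R h (f β) (f γ) := by
  let f : ∀ α, S α := WellFoundedLT.fix fun α F => (hstep α F).choose
  refine ⟨f, fun β γ h => ?_⟩
  induction γ using WellFoundedLT.induction generalizing β with
  | ind γ ih =>
    rcases h.eq_or_lt with rfl | hβγ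
    · exact hrefl β (f β)
    · rw [show f γ = _ from WellFoundedLT.fix_eq _ γ]
      exact (hstep γ _).choose_spec (fun β' γ' _ hγ' h' => ih γ' hγ' β' h') β hβγ

lemma Stage.exists_coherent_extension {κ : Cardinal.{w}} {μ : Ordinal.{w}}
    {u : Idx κ.ord ⥤ RP C} {x : Idx μ ⥤ RP C} (hκ : κ.IsRegular) (hu : IsFraisseSeq u)
    (husc : IsSemicontinuousSeq u) (hpa : HasProperAmalgamations C) (hμ : μ ≤ κ.ord)
    (hx : IsSemicontinuousSeq x) (α : Idx μ) (F : ∀ β < α, Stage u x β) :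
    ∃ s : Stage u x α,
      (∀ β γ (hβ : β < α) (hγ : γ < α) (h : β ≤ γ), (F β hβ).Coherent h (F γ hγ)) →
        ∀ β hβ, (F β hβ).Coherent (le_of_lt hβ) s := by
  obtain ⟨ζ₀, ⟨f₀⟩⟩ := hu.1 (x.obj α)
  by_cases hF : ∀ β γ (hβ : β < α) (hγ : γ < α) (h : β ≤ γ), (F β hβ).Coherent h (F γ hγ)
  swap
  · exact ⟨⟨ζ₀, f₀⟩, fun h => absurd h hF⟩
  suffices ∃ s : Stage u x α, ∀ β hβ, (F β hβ).Coherent (le_of_lt hβ) s from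
    this.imp fun _ hs _ => hs
  rcases Ordinal.zero_or_succ_or_isSuccLimit α.1 with h0 | ⟨b, hb⟩ | hlim
  · exact ⟨⟨ζ₀, f₀⟩, fun β hβ => (not_lt_zero (h0 ▸ hβ : β.1 < 0)).elim⟩
  · have hbα : b < α.1 := hb ▸ lt_succ b
    let β₀ : Idx μ := ⟨b, hbα.trans α.2⟩
    have := Idx.noMaxOrder (Cardinal.isSuccLimit_ord hκ.aleph0_le)
    obtain ⟨s, hs⟩ := exists_coherent_of_le hu hpa (le_of_lt (show β₀ < α from hbα)) (F β₀ hbα)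
    refine ⟨s, fun β hβ => ?_⟩
    have hββ₀ : β.1 ≤ b := lt_succ_iff.mp (hb ▸ hβ : β.1 < succ b)
    exact (hF β β₀ hβ hbα hββ₀).trans hs
  · obtain ⟨θ, hθ, hFθ, hcof⟩ := hκ.exists_isSuccLimit_cofinal hlim (α.2.trans_le hμ)
      (φ := fun i => (F ⟨i.1, i.2.trans α.2⟩ i.2).1)
      fun i j hij => (hF _ _ i.2 j.2 hij.le).lt_of_lt hij
    obtain ⟨f, hf⟩ := exists_coherent_of_isSuccLimit husc hx hlim hθ F hF
      (fun β hβ => hFθ ⟨β.1, hβ⟩) fun ζ hζ =>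
        let ⟨i, hi⟩ := hcof ζ hζ
        ⟨⟨i.1, i.2.trans α.2⟩, i.2, hi⟩
    exact ⟨⟨θ, f⟩, hf⟩

/-- if `u` is a semicontinuous Fraïssé sequence of regular length `κ` in `↻K`
and `↻K` has proper amalgamations, then every semicontinuous sequence of length `≤ κ` in
`↻K` admits a morphism of sequences into `u` which additionally intertwines the `r`- and
`e`-components as in (ii). -/
theorem exists_seqHom_of_semicontinuous_seq
    (κ : Cardinal.{w}) (hκ : κ.IsRegular)
    (u : Idx κ.ord ⥤ RP C) (hu : IsFraisseSeq u) (husc : IsSemicontinuousSeq u)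
    (hpa : HasProperAmalgamations C)
    (μ : Ordinal.{w}) (hμ : μ ≤ κ.ord) (x : Idx μ ⥤ RP C) (hx : IsSemicontinuousSeq x) :
    ∃ (φ : Idx μ → Idx κ.ord) (hφ : StrictMono φ)
      (f : ∀ α : Idx μ, x.obj α ⟶ u.obj (φ α)),
      ∀ (ξ η : Idx μ) (h : ξ < η),
        (f ξ ≫ u.map (homOfLE (hφ h).le) = x.map (homOfLE h.le) ≫ f η) ∧
        ((f η).e ≫ (u.map (homOfLE (hφ h).le)).r = (x.map (homOfLE h.le)).r ≫ (f ξ).e) := by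
  obtain ⟨s, hs⟩ := WellFoundedLT.exists_coherent_family (S := Stage u x)
    (fun h p q => p.Coherent h q) (fun _ => Stage.Coherent.refl)
    (Stage.exists_coherent_extension hκ hu husc hpa hμ hx)
  exact ⟨fun α => (s α).1, fun β γ h => (hs β γ h.le).lt_of_lt h, fun α => (s α).2,
    fun ξ η h => ⟨(hs ξ η h.le).isProperSq.w.symm, (hs ξ η h.le).isProperSq.r_e_top.symm⟩⟩
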